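/- arXiv:1007.4286 — 4 statements merged into one kernel-verified Lean document; each statement's English description precedes it below -/
import Mathlib

section
/- If F̄ is order-regularly varying and ρ > ρ(F̄) (the upper order), then x^{-ρ} = o(F̄(x)) as x → ∞; in particular, F̄ is asymptotically heavier than some power-law curve. -/
open Filter Asymptotics

/-- If `F` is order-regularly varying and `ρ` is strictly greater than the upper order of `F`,
then `x^{-ρ} = o(F(x))` as `x → ∞`: `F` is asymptotically heavier than a power-law curve. -/
theorem rpow_isLittleO_of_orderRegVarying
    (F : ℝ → ℝ) (hpos : ∀ x > (0 : ℝ), 0 < F x) (hle : ∀ x > (0 : ℝ), F x ≤ 1)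
    (hmono : AntitoneOn F (Set.Ioi 0))
    (hOR : ∃ Γ : ℝ, 1 < Γ ∧ ∀ k : ℝ, 1 ≤ k → k ≤ Γ →
      (0 : EReal) < liminf (fun x => ((F (k * x) / F x : ℝ) : EReal)) atTop ∧
      limsup (fun x => ((F (k * x) / F x : ℝ) : EReal)) atTop < ⊤) 
    (ρ : ℝ)
    (hρ : limsup (fun x : ℝ => ((-Real.log (F x) / Real.log x : ℝ) : EReal)) atTop
        < (ρ : EReal)) :
    (fun x : ℝ => x ^ (-ρ)) =o[atTop] F := by
  obtain ⟨ρ', hρ'1, hρ'2⟩ := EReal.exists_between_coe_real hρ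
  have hρ'ρ : ρ' < ρ := by exact_mod_cast hρ'2
  have hev : ∀ᶠ x : ℝ in atTop, ((-Real.log (F x) / Real.log x : ℝ) : EReal) < (ρ' : EReal) :=
    eventually_lt_of_limsup_lt hρ'1
  have h1 : ∀ᶠ x : ℝ in atTop, x ^ (-ρ') ≤ F x := by
    filter_upwards [hev, eventually_gt_atTop (1:ℝ)] with x hx hx1
    have hlogx : 0 < Real.log x := Real.log_pos hx1
    have hFx : 0 < F x := hpos x (by linarith)
    have hx' : -Real.log (F x) / Real.log x < ρ' := by exact_mod_cast hx
    have hlt : -Real.log (F x) < ρ' * Real.log x := by rwa [div_lt_iff₀ hlogx] at hx'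
    have hlog : (-ρ') * Real.log x ≤ Real.log (F x) := by nlinarith
    calc x ^ (-ρ') = Real.exp ((-ρ') * Real.log x) := by
          rw [Real.rpow_def_of_pos (by linarith), mul_comm]
      _ ≤ Real.exp (Real.log (F x)) := Real.exp_le_exp.2 hlog
      _ = F x := Real.exp_log hFx
  have h2 : (fun x : ℝ => x ^ (-ρ)) =o[atTop] (fun x : ℝ => x ^ (-ρ')) := by
    rw [isLittleO_iff_tendsto']
    · have heq : ∀ᶠ x : ℝ in atTop, x ^ (-(ρ - ρ')) = x ^ (-ρ) / x ^ (-ρ') := by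
        filter_upwards [eventually_gt_atTop (0:ℝ)] with x hx
        rw [← Real.rpow_sub hx]; ring_nf
      exact (tendsto_rpow_neg_atTop (by linarith)).congr' heq
    · filter_upwards [eventually_gt_atTop (0:ℝ)] with x hx h0
      exact absurd h0 (ne_of_gt (Real.rpow_pos_of_pos hx _))
  have h3 : (fun x : ℝ => x ^ (-ρ')) =O[atTop] F := by
    rw [isBigO_iff]
    refine ⟨1, ?_⟩
    filter_upwards [h1, eventually_gt_atTop (0:ℝ)] with x hx hx0
    rw [Real.norm_eq_abs, Real.norm_eq_abs, abs_of_nonneg (Real.rpow_nonneg hx0.le _),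
      abs_of_pos (hpos x hx0), one_mul]
    exact hx
  exact h2.trans_isBigO h3
end

section
/- If H₊ has tail coefficient C_H ∈ (1,∞) and its residual distribution H_R satisfies sup_n n P(H₊ > n)/P(H_R > n) < ∞, then the tail coefficient of H_R equals C_H − 1. -/
/-!
Summing by parts, `∑ₖ kʳ P(H₊ ≥ k) = E[∑_{k ≤ H₊} kʳ]`, and `∑_{k ≤ n} kʳ` is of order `n^(r+1)`
(squeezed between `n^(r+1)/(r+1)` and `n^(r+1)` by comparison with `∫₀ⁿ xʳ dx`). Hence `H_R` has a
finite `r`-th moment exactly when `H₊` has a finite `(r+1)`-th moment, and the tail coefficient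
drops by one.
-/

theorem sum_range_add_one_rpow_le {r : ℝ} (hr : 0 ≤ r) (n : ℕ) :
    ∑ k ∈ Finset.range n, ((k : ℝ) + 1) ^ r ≤ (n : ℝ) ^ (r + 1) := by
  calc ∑ k ∈ Finset.range n, ((k : ℝ) + 1) ^ r ≤ ∑ _k ∈ Finset.range n, (n : ℝ) ^ r := by
        gcongr with k hk
        exact_mod_cast Finset.mem_range.mp hk
    _ = (n : ℝ) ^ (r + 1) := by
        rw [Finset.sum_const, Finset.card_range, nsmul_eq_mul,
          Real.rpow_add_one' (Nat.cast_nonneg n) (by positivity), mul_comm]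

theorem rpow_add_one_le_mul_sum_range_add_one_rpow {r : ℝ} (hr : 0 ≤ r) (n : ℕ) :
    (n : ℝ) ^ (r + 1) ≤ (r + 1) * ∑ k ∈ Finset.range n, ((k : ℝ) + 1) ^ r := by
  have hmono : MonotoneOn (fun x : ℝ => x ^ r) (Set.Icc 0 (0 + n)) :=
    (Real.monotoneOn_rpow_Ici_of_exponent_nonneg hr).mono fun x hx => hx.1
  have h := hmono.integral_le_sum
  rw [zero_add, integral_rpow (Or.inl (by linarith)),
    Real.zero_rpow (by linarith), sub_zero, div_le_iff₀' (by linarith)] at h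
  simpa [add_comm] using h

theorem summable_mul_sum_range_add_one_rpow_iff {p : ℕ → ℝ} (hp : 0 ≤ p) {r : ℝ} (hr : 0 ≤ r) :
    (Summable fun i : ℕ => p i * ∑ k ∈ Finset.range i, ((k : ℝ) + 1) ^ r) ↔
      Summable fun i : ℕ => (i : ℝ) ^ (r + 1) * p i := by
  constructor
  · intro h
    refine (h.mul_left (r + 1)).of_nonneg_of_le (fun i => mul_nonneg (by positivity) (hp i))
      fun i => ?_
    rw [mul_left_comm, mul_comm (p i)]
    exact mul_le_mul_of_nonneg_right (rpow_add_one_le_mul_sum_range_add_one_rpow hr i) (hp i)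
  · intro h
    refine h.of_nonneg_of_le (fun i => mul_nonneg (hp i) (by positivity)) fun i => ?_
    rw [mul_comm]
    exact mul_le_mul_of_nonneg_right (sum_range_add_one_rpow_le hr i) (hp i)

noncomputable def tailSum (p : ℕ → ℝ) (k : ℕ) : ℝ := ∑' i, if k ≤ i then p i else 0

theorem Summable.ite_le {p : ℕ → ℝ} (hP : Summable p) (k : ℕ) :
    Summable fun i => if k ≤ i then p i else 0 :=
  (hP.indicator {i | k ≤ i}).congr fun i => by simp [Set.indicator_apply]

/-- Tonelli: both sides are the iterated sums of the nonnegative double series `(k + 1)ʳ p i`,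
`k < i`. -/
theorem summable_add_one_rpow_mul_tailSum_iff {p : ℕ → ℝ} (hp : 0 ≤ p) (hP : Summable p)
    {r : ℝ} (hr : 0 ≤ r) :
    (Summable fun k : ℕ => ((k : ℝ) + 1) ^ r * tailSum p (k + 1)) ↔
      Summable fun i : ℕ => (i : ℝ) ^ (r + 1) * p i := by
  set g : ℕ × ℕ → ℝ := fun x => if x.1 < x.2 then ((x.1 : ℝ) + 1) ^ r * p x.2 else 0
  have hg : 0 ≤ g := fun x => by
    dsimp only [g]; split_ifs
    exacts [mul_nonneg (by positivity) (hp _), le_rfl]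
  have hrow (k : ℕ) : (fun i => g (k, i)) =
      fun i => ((k : ℝ) + 1) ^ r * if k + 1 ≤ i then p i else 0 := by
    ext i; simp only [g, Nat.succ_le_iff]; split_ifs <;> simp
  have hcol (i : ℕ) : ∀ k ∉ Finset.range i, g (k, i) = 0 := fun k hk =>
    if_neg (by simpa using hk)
  have hrows : Summable g ↔ Summable fun k : ℕ => ((k : ℝ) + 1) ^ r * tailSum p (k + 1) := by
    simp only [summable_prod_of_nonneg hg, hrow, tsum_mul_left,
      fun k => (hP.ite_le (k + 1)).mul_left (((k : ℝ) + 1) ^ r), implies_true,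
      true_and, tailSum]
  have hcols : Summable g ↔
      Summable fun i : ℕ => p i * ∑ k ∈ Finset.range i, ((k : ℝ) + 1) ^ r := by
    rw [← (Equiv.prodComm ℕ ℕ).summable_iff (f := g),
      summable_prod_of_nonneg (f := g ∘ Equiv.prodComm ℕ ℕ) (fun x => hg (Equiv.prodComm ℕ ℕ x))]
    simp only [Function.comp_apply, Equiv.prodComm_apply, Prod.swap_prod_mk,
      fun i => summable_of_ne_finset_zero (L := .unconditional ℕ) (hcol i),
      fun i => tsum_eq_sum (L := .unconditional ℕ) (hcol i), implies_true, true_and]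
    refine summable_congr fun i => ?_
    rw [Finset.mul_sum]
    refine Finset.sum_congr rfl fun k hk => ?_
    exact (if_pos (Finset.mem_range.mp hk)).trans (mul_comm _ _)
  rw [← hrows, hcols, summable_mul_sum_range_add_one_rpow_iff hp hr]

theorem summable_rpow_mul_iff_of_eq_tailSum_div {p q : ℕ → ℝ} {M : ℝ} (hM : M ≠ 0)
    (hq : ∀ k : ℕ, q k = if k = 0 then 0 else tailSum p k / M) (r : ℝ) :
    (Summable fun k : ℕ => (k : ℝ) ^ r * q k) ↔
      Summable fun k : ℕ => ((k : ℝ) + 1) ^ r * tailSum p (k + 1) := by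
  rw [← summable_nat_add_iff 1,
    ← summable_div_const_iff hM (f := fun k : ℕ => ((k : ℝ) + 1) ^ r * tailSum p (k + 1))]
  simp only [hq, Nat.add_one_ne_zero, if_false, Nat.cast_add_one, mul_div_assoc]

noncomputable def tailCoeff (f : ℕ → ℝ) : EReal :=
  sSup {c : EReal | ∃ r : ℝ, 0 ≤ r ∧ c = (r : EReal) ∧ Summable fun k : ℕ => (k : ℝ) ^ r * f k}

theorem tailCoeff_eq_sub_one {f g : ℕ → ℝ} {C : ℝ} (hC : 1 < C) (hf : tailCoeff f = C)
    (hfg : ∀ r : ℝ, 0 ≤ r → ((Summable fun k : ℕ => (k : ℝ) ^ r * g k) ↔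
      Summable fun k : ℕ => (k : ℝ) ^ (r + 1) * f k)) :
    tailCoeff g = ((C - 1 : ℝ) : EReal) := by
  apply le_antisymm
  · refine sSup_le ?_
    rintro _ ⟨r, hr, rfl, hg⟩
    have : ((r + 1 : ℝ) : EReal) ≤ C := hf ▸ le_sSup ⟨r + 1, by linarith, rfl, (hfg r hr).1 hg⟩
    exact EReal.coe_le_coe_iff.2 (by linarith [EReal.coe_le_coe_iff.1 this])
  · refine le_of_forall_lt fun c hc => ?_
    obtain ⟨x, hcx, hx⟩ := EReal.lt_iff_exists_real_btwn.mp hc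
    have hx' : ((max x 0 + 1 : ℝ) : EReal) < tailCoeff f := by
      have hxC : x < C - 1 := EReal.coe_lt_coe_iff.1 hx
      rw [hf, EReal.coe_lt_coe_iff]
      linarith [max_lt hxC (by linarith : 0 < C - 1)]
    obtain ⟨_, ⟨r, -, rfl, hfr⟩, hr⟩ := lt_sSup_iff.mp hx'
    have hr : max x 0 + 1 < r := EReal.coe_lt_coe_iff.1 hr
    have hgr : Summable fun k : ℕ => (k : ℝ) ^ (r - 1) * g k :=
      (hfg (r - 1) (by linarith [le_max_right x 0])).2 (by simpa using hfr)
    calc c < x := hcx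
      _ ≤ ((r - 1 : ℝ) : EReal) := EReal.coe_le_coe_iff.2 (by linarith [le_max_left x 0])
      _ ≤ tailCoeff g := le_sSup ⟨r - 1, by linarith [le_max_right x 0], rfl, hgr⟩

theorem residual_tail_coefficient_general
    (p : ℕ → ℝ) (M C_H : ℝ) (hp : ∀ n, 0 ≤ p n)
    (hsum : ∑' n, p n = 1) (hMpos : 0 < M)
    (hC : 1 < C_H)
    (htc : sSup {c : EReal | ∃ r : ℝ, 0 ≤ r ∧ c = (r : EReal) ∧
        Summable fun k : ℕ => (k : ℝ) ^ r * p k} = (C_H : EReal))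
    (q : ℕ → ℝ)
    (hq : ∀ k : ℕ, q k = if k = 0 then 0 else (∑' i, if k ≤ i then p i else 0) / M) :
    sSup {c : EReal | ∃ r : ℝ, 0 ≤ r ∧ c = (r : EReal) ∧
        Summable fun k : ℕ => (k : ℝ) ^ r * q k} = ((C_H - 1 : ℝ) : EReal) := by
  have hP : Summable p := by
    by_contra h
    simp [tsum_eq_zero_of_not_summable h] at hsum
  refine tailCoeff_eq_sub_one hC htc fun r hr => ?_
  rw [summable_rpow_mul_iff_of_eq_tailSum_div hMpos.ne' hq,
    summable_add_one_rpow_mul_tailSum_iff hp hP hr]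

/-- If `H₊` (pmf `p`, mean `M`) has tail coefficient `C_H ∈ (1,∞)`, and its residual
distribution `H_R` (pmf `q k = P(H₊ ≥ k)/M` for `k ≥ 1`) satisfies
`sup_n n P(H₊ > n)/P(H_R > n) < ∞`, then the tail coefficient of `H_R` equals `C_H - 1`. -/
theorem residual_tail_coefficient
    (p : ℕ → ℝ) (M C_H : ℝ) (hp : ∀ n, 0 ≤ p n) (hp0 : p 0 = 0)
    (hsum : ∑' n, p n = 1) (hMsum : Summable fun n : ℕ => (n : ℝ) * p n)
    (hM : M = ∑' n : ℕ, (n : ℝ) * p n) (hMpos : 0 < M)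
    (hC : 1 < C_H)
    (htc : sSup {c : EReal | ∃ r : ℝ, 0 ≤ r ∧ c = (r : EReal) ∧
        Summable fun k : ℕ => (k : ℝ) ^ r * p k} = (C_H : EReal))
    (q : ℕ → ℝ)
    (hq : ∀ k : ℕ, q k = if k = 0 then 0 else (∑' i, if k ≤ i then p i else 0) / M)
    (hbound : ∃ K : ℝ, ∀ n : ℕ,
        (n : ℝ) * (∑' i, if n < i then p i else 0) ≤ K * (∑' i : ℕ, if n < i then q i else 0)) :
    sSup {c : EReal | ∃ r : ℝ, 0 ≤ r ∧ c = (r : EReal) ∧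
        Summable fun k : ℕ => (k : ℝ) ^ r * q k} = ((C_H - 1 : ℝ) : EReal) :=
  residual_tail_coefficient_general p M C_H hp hsum hMpos hC htc q hq
end

section
/- Let N be a nonnegative integer-valued random variable whose tail P(N > ·) is intermediate-regularly varying, and let X_1, X_2, ... be i.i.d. nonnegative light-tailed random variables with mean μ > 0, independent of N. Then P(∑_{i=1}^N X_i > b) ~ P(N > b/μ) as b → ∞, i.e., the ratio of the two probabilities tends to 1. -/
/-!
Write `F x = P(N > x)` and `S n = X 0 + ⋯ + X (n - 1)`. Since `X 0` has exponential moments, its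
mgf is differentiable at `0` with derivative `m`, so for every `k > 1` Chernoff bounds give some
`c > 0` with `P(S n > b) ≤ exp (-c b)` for `n ≤ b / (m k)` and `P(S n ≤ b) ≤ exp (-c b)` for
`n ≥ k b / m`. Splitting on the size of `N` and using its independence from the `X i`,
`F (k b / m) (1 - exp (-c b)) ≤ P(S N > b) ≤ F (b / (m k)) + exp (-c b)`.
Intermediate regular variation makes `F (k x) / F x` eventually close to `1` once `k` is close
to `1`; it also makes `F` decay at most polynomially, so `exp (-c b) = o(F (b / m))`.
-/

open MeasureTheory Filter ProbabilityTheory Real Topology Finset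

lemma eventually_nhdsGT_zero_lt_exp_mul_of_hasDerivAt {f : ℝ → ℝ} {d a : ℝ}
    (hf : HasDerivAt f d 0) (hf0 : f 0 = 1) (hda : d < a) : ∀ᶠ t in 𝓝[>] 0, f t < exp (t * a) := by
  have hexp : HasDerivAt (fun t => exp (t * a)) a 0 := by
    simpa using ((hasDerivAt_id (0 : ℝ)).mul_const a).exp
  filter_upwards [(hasDerivAt_iff_tendsto_slope.1 (hexp.sub hf)).mono_left
      (nhdsWithin_mono _ fun t ht => ne_of_gt ht) (lt_mem_nhds (sub_pos.2 hda)),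
    self_mem_nhdsWithin] with t (hslope : (0 : ℝ) < slope _ 0 t) (ht : 0 < t)
  rw [slope_def_field] at hslope
  simp only [Pi.sub_apply, hf0, zero_mul, exp_zero, sub_self, sub_zero] at hslope
  linarith [(div_pos_iff_of_pos_right ht).1 hslope]

lemma eventually_nhdsLT_zero_lt_exp_mul_of_hasDerivAt {f : ℝ → ℝ} {d a : ℝ}
    (hf : HasDerivAt f d 0) (hf0 : f 0 = 1) (had : a < d) : ∀ᶠ t in 𝓝[<] 0, f t < exp (t * a) := by
  have hexp : HasDerivAt (fun t => exp (t * a)) a 0 := by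
    simpa using ((hasDerivAt_id (0 : ℝ)).mul_const a).exp
  filter_upwards [(hasDerivAt_iff_tendsto_slope.1 (hexp.sub hf)).mono_left
      (nhdsWithin_mono _ fun t ht => ne_of_lt ht) (gt_mem_nhds (sub_neg.2 had)),
    self_mem_nhdsWithin] with t (hslope : slope _ 0 t < (0 : ℝ)) (ht : t < 0)
  rw [slope_def_field] at hslope
  simp only [Pi.sub_apply, hf0, zero_mul, exp_zero, sub_self, sub_zero] at hslope
  linarith [(div_lt_iff_of_neg ht).1 hslope]

section Chernoff

variable {Ω : Type*} [MeasurableSpace Ω] {μ : Measure Ω}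

lemma mgf_sum_range_eq_pow {X : ℕ → Ω → ℝ} (hmeas : ∀ i, Measurable (X i))
    (hiid : iIndepFun X μ) (hident : ∀ i, IdentDistrib (X i) (X 0) μ μ) (n : ℕ) (t : ℝ) :
    mgf (∑ i ∈ range n, X i) μ t = mgf (X 0) μ t ^ n := by
  rw [hiid.mgf_sum hmeas, prod_congr rfl fun i _ => mgf_congr_of_identDistrib _ _ (hident i) t,
    prod_const, card_range]

variable [IsProbabilityMeasure μ]

lemma zero_mem_interior_integrableExpSet_of_nonneg {X : Ω → ℝ} (hX : Measurable X)
    (hnn : ∀ ω, 0 ≤ X ω) {θ : ℝ} (hθ : 0 < θ) (h : Integrable (fun ω => exp (θ * X ω)) μ) :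
    0 ∈ interior (integrableExpSet X μ) := by
  refine mem_interior_iff_mem_nhds.2 (mem_of_superset (Iio_mem_nhds hθ) fun t ht => ?_)
  rcases le_total t 0 with ht0 | ht0
  · refine .of_mem_Icc 0 1 (hX.const_mul t).exp.aemeasurable (ae_of_all _ fun ω => ?_)
    exact ⟨(exp_pos _).le, exp_le_one_iff.2 (mul_nonpos_of_nonpos_of_nonneg ht0 (hnn ω))⟩
  · exact integrable_exp_mul_of_nonneg_of_le h ht0 (le_of_lt ht)

lemma exists_pos_mgf_lt_exp_mul {X : Ω → ℝ} (h0 : 0 ∈ interior (integrableExpSet X μ))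
    {a : ℝ} (ha : μ[X] < a) : ∃ t > 0, t ∈ integrableExpSet X μ ∧ mgf X μ t < exp (t * a) := by
  have hd : HasDerivAt (mgf X μ) μ[X] 0 := by simpa using hasDerivAt_mgf h0
  obtain ⟨t, ⟨hlt, hint⟩, ht⟩ :=
    (((eventually_nhdsGT_zero_lt_exp_mul_of_hasDerivAt hd mgf_zero ha).and
      (nhdsWithin_le_nhds (mem_interior_iff_mem_nhds.1 h0))).and self_mem_nhdsWithin).exists
  exact ⟨t, ht, hint, hlt⟩

lemma exists_neg_mgf_lt_exp_mul {X : Ω → ℝ} (h0 : 0 ∈ interior (integrableExpSet X μ))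
    {a : ℝ} (ha : a < μ[X]) : ∃ t < 0, t ∈ integrableExpSet X μ ∧ mgf X μ t < exp (t * a) := by
  have hd : HasDerivAt (mgf X μ) μ[X] 0 := by simpa using hasDerivAt_mgf h0
  obtain ⟨t, ⟨hlt, hint⟩, ht⟩ :=
    (((eventually_nhdsLT_zero_lt_exp_mul_of_hasDerivAt hd mgf_zero ha).and
      (nhdsWithin_le_nhds (mem_interior_iff_mem_nhds.1 h0))).and self_mem_nhdsWithin).exists
  exact ⟨t, ht, hint, hlt⟩

variable {X : ℕ → Ω → ℝ}

lemma integrable_exp_mul_sum_range (hmeas : ∀ i, Measurable (X i)) (hiid : iIndepFun X μ)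
    (hident : ∀ i, IdentDistrib (X i) (X 0) μ μ) {t : ℝ} (ht : t ∈ integrableExpSet (X 0) μ)
    (n : ℕ) : Integrable (fun ω => exp (t * (∑ i ∈ range n, X i) ω)) μ :=
  hiid.integrable_exp_mul_sum hmeas fun i _ =>
    ((hident i).comp (measurable_const_mul t).exp).integrable_iff.2 ht

lemma measureReal_sum_range_ge_le_exp_mul_mgf_pow (hmeas : ∀ i, Measurable (X i))
    (hiid : iIndepFun X μ) (hident : ∀ i, IdentDistrib (X i) (X 0) μ μ) {t : ℝ} (ht0 : 0 ≤ t)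
    (ht : t ∈ integrableExpSet (X 0) μ) (n : ℕ) (b : ℝ) :
    μ.real {ω | b ≤ ∑ i ∈ range n, X i ω} ≤ exp (-t * b) * mgf (X 0) μ t ^ n := by
  simpa [mgf_sum_range_eq_pow hmeas hiid hident] using
    measure_ge_le_exp_mul_mgf b ht0 (integrable_exp_mul_sum_range hmeas hiid hident ht n)

lemma measureReal_sum_range_le_le_exp_mul_mgf_pow (hmeas : ∀ i, Measurable (X i))
    (hiid : iIndepFun X μ) (hident : ∀ i, IdentDistrib (X i) (X 0) μ μ) {t : ℝ} (ht0 : t ≤ 0)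
    (ht : t ∈ integrableExpSet (X 0) μ) (n : ℕ) (b : ℝ) :
    μ.real {ω | ∑ i ∈ range n, X i ω ≤ b} ≤ exp (-t * b) * mgf (X 0) μ t ^ n := by
  simpa [mgf_sum_range_eq_pow hmeas hiid hident] using
    measure_le_le_exp_mul_mgf b ht0 (integrable_exp_mul_sum_range hmeas hiid hident ht n)

lemma exists_measureReal_sum_range_gt_le_exp (hmeas : ∀ i, Measurable (X i))
    (hiid : iIndepFun X μ) (hident : ∀ i, IdentDistrib (X i) (X 0) μ μ)
    (h0 : 0 ∈ interior (integrableExpSet (X 0) μ)) {a : ℝ} (ha0 : 0 < a) (ha : μ[X 0] < a) :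
    ∃ c > 0, ∀ (n : ℕ) (b : ℝ), n * a ≤ b →
      μ.real {ω | b < ∑ i ∈ range n, X i ω} ≤ exp (-(c * b)) := by
  obtain ⟨a', ha'0, ha'⟩ := exists_between (max_lt ha ha0)
  obtain ⟨t, ht0, ht, hmgf⟩ := exists_pos_mgf_lt_exp_mul h0 ((le_max_left _ _).trans_lt ha'0)
  have ha'nn : 0 ≤ a' := (le_max_right _ _).trans ha'0.le
  refine ⟨t * (a - a') / a, by have := sub_pos.2 ha'; positivity, fun n b hnb => ?_⟩
  have hn : n * (t * a') ≤ t * a' / a * b := by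
    calc n * (t * a') = t * a' / a * (n * a) := by field_simp
      _ ≤ t * a' / a * b := by gcongr
  calc μ.real {ω | b < ∑ i ∈ range n, X i ω}
      ≤ μ.real {ω | b ≤ ∑ i ∈ range n, X i ω} :=
      measureReal_mono (Set.ofPred_subset_ofPred.2 fun _ => le_of_lt)
    _ ≤ exp (-t * b) * mgf (X 0) μ t ^ n :=
      measureReal_sum_range_ge_le_exp_mul_mgf_pow hmeas hiid hident ht0.le ht n b
    _ ≤ exp (-t * b) * exp (t * a') ^ n := by gcongr; exact mgf_nonneg
    _ = exp (-t * b + n * (t * a')) := by rw [← exp_nat_mul, exp_add]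
    _ ≤ exp (-(t * (a - a') / a * b)) := by
      gcongr
      calc -t * b + n * (t * a') ≤ -t * b + t * a' / a * b := by linarith
        _ = -(t * (a - a') / a * b) := by field_simp; ring

lemma exists_measureReal_sum_range_le_le_exp (hmeas : ∀ i, Measurable (X i))
    (hiid : iIndepFun X μ) (hident : ∀ i, IdentDistrib (X i) (X 0) μ μ)
    (h0 : 0 ∈ interior (integrableExpSet (X 0) μ)) {a : ℝ} (ha0 : 0 < a) (ha : a < μ[X 0]) :
    ∃ c > 0, ∀ (n : ℕ) (b : ℝ), b ≤ n * a →
      μ.real {ω | ∑ i ∈ range n, X i ω ≤ b} ≤ exp (-(c * b)) := by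
  obtain ⟨a', ha', ha'0⟩ := exists_between ha
  obtain ⟨t, ht0, ht, hmgf⟩ := exists_neg_mgf_lt_exp_mul h0 ha'0
  refine ⟨-t * (a' - a) / a, by have := sub_pos.2 ha'; have := neg_pos.2 ht0; positivity,
    fun n b hbn => ?_⟩
  have hn : n * (t * a') ≤ t * a' / a * b := by
    calc n * (t * a') = t * a' / a * (n * a) := by field_simp
      _ ≤ t * a' / a * b :=
        mul_le_mul_of_nonpos_left hbn (div_nonpos_of_nonpos_of_nonneg
          (mul_nonpos_of_nonpos_of_nonneg ht0.le (by linarith)) ha0.le)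
  calc μ.real {ω | ∑ i ∈ range n, X i ω ≤ b}
      ≤ exp (-t * b) * mgf (X 0) μ t ^ n :=
      measureReal_sum_range_le_le_exp_mul_mgf_pow hmeas hiid hident ht0.le ht n b
    _ ≤ exp (-t * b) * exp (t * a') ^ n := by gcongr; exact mgf_nonneg
    _ = exp (-t * b + n * (t * a')) := by rw [← exp_nat_mul, exp_add]
    _ ≤ exp (-(-t * (a' - a) / a * b)) := by
      gcongr
      calc -t * b + n * (t * a') ≤ -t * b + t * a' / a * b := by linarith
        _ = -(-t * (a' - a) / a * b) := by field_simp; ring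

end Chernoff

section Tail

variable {f : ℝ → ℝ} {k a : ℝ}

lemma pow_mul_le_of_mul_le {x₀ : ℝ} (hk : 1 ≤ k) (ha : 0 ≤ a) (hx₀ : 0 ≤ x₀)
    (hstep : ∀ x ≥ x₀, a * f x ≤ f (k * x)) (j : ℕ) : a ^ j * f x₀ ≤ f (k ^ j * x₀) := by
  induction j with
  | zero => simp
  | succ j ih =>
    calc a ^ (j + 1) * f x₀ = a * (a ^ j * f x₀) := by ring
      _ ≤ a * f (k ^ j * x₀) := by gcongr
      _ ≤ f (k * (k ^ j * x₀)) := hstep _ (le_mul_of_one_le_left hx₀ (one_le_pow₀ hk))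
      _ = f (k ^ (j + 1) * x₀) := by ring_nf

lemma exists_rpow_mul_le_of_mul_le (hf : Antitone f) (hf0 : ∀ x, 0 ≤ f x) (hk : 1 < k)
    (ha0 : 0 < a) (ha1 : a ≤ 1) (hstep : ∀ᶠ x in atTop, a * f x ≤ f (k * x)) :
    ∃ x₀ > 0, ∀ x ≥ x₀, a * (x / x₀) ^ logb k a * f x₀ ≤ f x := by
  obtain ⟨x₁, hx₁⟩ := eventually_atTop.1 hstep
  set x₀ := max x₁ 1
  have hx₀ : 0 < x₀ := zero_lt_one.trans_le (le_max_right _ _)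
  refine ⟨x₀, hx₀, fun x hx => ?_⟩
  set y := x / x₀
  have hy : 1 ≤ y := (one_le_div hx₀).2 hx
  set j := ⌈logb k y⌉₊
  have hyj : y ≤ k ^ j := by
    rw [← rpow_natCast, ← logb_le_iff_le_rpow hk (zero_lt_one.trans_le hy)]
    exact Nat.le_ceil _
  -- `a ^ logb k y = y ^ logb k a`: both are `exp (log a * log y / log k)`
  have hswap : a ^ logb k y = y ^ logb k a := by
    rw [rpow_def_of_pos ha0, rpow_def_of_pos (zero_lt_one.trans_le hy), logb, logb]
    ring_nf
  calc a * y ^ logb k a * f x₀ = a ^ (logb k y + 1) * f x₀ := by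
        rw [rpow_add ha0, rpow_one, hswap, mul_comm a]
    _ ≤ a ^ j * f x₀ := by
        rw [← rpow_natCast]
        exact mul_le_mul_of_nonneg_right (rpow_le_rpow_of_exponent_ge ha0 ha1
          (Nat.ceil_lt_add_one (logb_nonneg hk hy)).le) (hf0 _)
    _ ≤ f (k ^ j * x₀) :=
        pow_mul_le_of_mul_le hk.le ha0.le hx₀.le
          (fun x hx => hx₁ x ((le_max_left _ _).trans hx)) j
    _ ≤ f x := hf (by rwa [← div_le_iff₀ hx₀])

lemma tendsto_exp_neg_mul_div_of_mul_le (hf : Antitone f) (hpos : ∀ x, 0 < f x) (hk : 1 < k)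
    (ha0 : 0 < a) (ha1 : a ≤ 1) (hstep : ∀ᶠ x in atTop, a * f x ≤ f (k * x)) {c : ℝ}
    (hc : 0 < c) : Tendsto (fun x => exp (-(c * x)) / f x) atTop (𝓝 0) := by
  obtain ⟨x₀, hx₀, hlow⟩ :=
    exists_rpow_mul_le_of_mul_le hf (fun x => (hpos x).le) hk ha0 ha1 hstep
  set α := logb k a
  have hlim := (tendsto_rpow_mul_exp_neg_mul_atTop_nhds_zero (-α) c hc).const_mul
    (x₀ ^ α / (a * f x₀))
  rw [mul_zero] at hlim
  refine squeeze_zero' (Eventually.of_forall fun x => (div_pos (exp_pos _) (hpos x)).le) ?_ hlim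
  filter_upwards [eventually_ge_atTop x₀] with x hx
  have hx0 : 0 < x := hx₀.trans_le hx
  calc exp (-(c * x)) / f x ≤ exp (-(c * x)) / (a * (x / x₀) ^ α * f x₀) := by
        gcongr
        · exact mul_pos (mul_pos ha0 (rpow_pos_of_pos (div_pos hx0 hx₀) _)) (hpos x₀)
        · exact hlow x hx
    _ = x₀ ^ α / (a * f x₀) * (x ^ (-α) * exp (-c * x)) := by
        rw [div_rpow hx0.le hx₀.le, rpow_neg hx0.le]
        field_simp

lemma exists_eventually_mul_le_of_tendsto_liminf (hpos : ∀ x, 0 < f x)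
    (h : Tendsto (fun k => liminf (fun x => f (k * x) / f x) atTop) (𝓝[>] 1) (𝓝 1))
    (ha : a < 1) : ∃ k > 1, ∀ᶠ x in atTop, a * f x ≤ f (k * x) := by
  obtain ⟨k, hk, hk1⟩ := ((h.eventually (lt_mem_nhds ha)).and self_mem_nhdsWithin).exists
  refine ⟨k, hk1, ?_⟩
  have hbdd : IsBoundedUnder (· ≥ ·) atTop fun x => f (k * x) / f x :=
    isBoundedUnder_of ⟨0, fun x => (div_pos (hpos _) (hpos x)).le⟩
  filter_upwards [eventually_lt_of_lt_liminf hk hbdd] with x hx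
  exact ((lt_div_iff₀ (hpos x)).1 hx).le

end Tail

lemma tendsto_of_eventually_le_le {ι α β : Type*} [TopologicalSpace β] [LinearOrder β]
    [OrderTopology β] {L : Filter ι} [L.NeBot] {l : Filter α} {g : α → β} {φ ψ : ι → β} {c : β}
    (hφ : Tendsto φ L (𝓝 c)) (hψ : Tendsto ψ L (𝓝 c))
    (h : ∀ᶠ i in L, ∀ᶠ x in l, φ i ≤ g x ∧ g x ≤ ψ i) : Tendsto g l (𝓝 c) := by
  refine tendsto_order.2 ⟨fun a ha => ?_, fun a ha => ?_⟩
  · obtain ⟨i, hi, hgi⟩ := ((hφ.eventually (lt_mem_nhds ha)).and h).exists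
    exact hgi.mono fun x hx => hi.trans_le hx.1
  · obtain ⟨i, hi, hgi⟩ := ((hψ.eventually (gt_mem_nhds ha)).and h).exists
    exact hgi.mono fun x hx => hx.2.trans_lt hi

section RandomSum

variable {Ω : Type*} [MeasurableSpace Ω] {μ : Measure Ω} [IsFiniteMeasure μ] {N : Ω → ℕ}
  {X : ℕ → Ω → ℝ}

lemma measureReal_mul_le_measureReal_lt_sum_random (hindep : IndepFun N (fun ω i => X i ω) μ)
    (hnn : ∀ i ω, 0 ≤ X i ω) (y b : ℝ) :
    μ.real {ω | y < N ω} * μ.real {ω | b < ∑ i ∈ range ⌈y⌉₊, X i ω}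
      ≤ μ.real {ω | b < ∑ i ∈ range (N ω), X i ω} := by
  have hsplit : μ.real ({ω | y < N ω} ∩ {ω | b < ∑ i ∈ range ⌈y⌉₊, X i ω})
      = μ.real {ω | y < N ω} * μ.real {ω | b < ∑ i ∈ range ⌈y⌉₊, X i ω} := by
    simp only [measureReal_def, ← ENNReal.toReal_mul]
    congr 1
    exact hindep.measure_inter_preimage_eq_mul {j : ℕ | y < j}
      {x : ℕ → ℝ | b < ∑ i ∈ range ⌈y⌉₊, x i} trivial
      (measurableSet_lt measurable_const (by fun_prop))
  rw [← hsplit]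
  refine measureReal_mono fun ω ⟨(hN : y < N ω), (hS : b < _)⟩ => hS.trans_le ?_
  exact sum_le_sum_of_subset_of_nonneg (range_subset_range.2 (Nat.ceil_le.2 hN.le))
    fun i _ _ => hnn i ω

lemma measureReal_lt_sum_random_le (hnn : ∀ i ω, 0 ≤ X i ω) (y b : ℝ) :
    μ.real {ω | b < ∑ i ∈ range (N ω), X i ω}
      ≤ μ.real {ω | y < N ω} + μ.real {ω | b < ∑ i ∈ range ⌊y⌋₊, X i ω} := by
  refine (measureReal_mono fun ω (hω : b < _) => ?_).trans (measureReal_union_le _ _)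
  rcases lt_or_ge y (N ω) with hN | hN
  · exact Or.inl hN
  · refine Or.inr (hω.trans_le ?_)
    exact sum_le_sum_of_subset_of_nonneg (range_subset_range.2 (Nat.le_floor hN))
      fun i _ _ => hnn i ω

end RandomSum

section Asymptotics

variable {Ω : Type*} [MeasurableSpace Ω] {μ : Measure Ω} [IsProbabilityMeasure μ] {N : Ω → ℕ}
  {X : ℕ → Ω → ℝ} {m k η : ℝ}

lemma eventually_sq_le_measureReal_lt_sum_random_div (hm : 0 < m)
    (hmeasX : ∀ i, Measurable (X i)) (hnn : ∀ i ω, 0 ≤ X i ω) (hiid : iIndepFun X μ)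
    (hident : ∀ i, IdentDistrib (X i) (X 0) μ μ) (hindepN : IndepFun N (fun ω i => X i ω) μ)
    (hmean : μ[X 0] = m) (h0 : 0 ∈ interior (integrableExpSet (X 0) μ))
    (hpos : ∀ x : ℝ, 0 < μ.real {ω | x < N ω}) (hk : 1 < k) (hη0 : 0 < η) (hη1 : η ≤ 1)
    (hF : ∀ᶠ x : ℝ in atTop, (1 - η) * μ.real {ω | x < N ω} ≤ μ.real {ω | k * x < N ω}) :
    ∀ᶠ b in atTop,
      (1 - η) ^ 2 ≤ μ.real {ω | b < ∑ i ∈ range (N ω), X i ω} / μ.real {ω | b / m < N ω} := by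
  have hk0 : 0 < k := zero_lt_one.trans hk
  obtain ⟨c, hc, hdev⟩ := exists_measureReal_sum_range_le_le_exp hmeasX hiid hident h0
    (div_pos hm hk0) (by rw [hmean]; exact div_lt_self hm hk)
  have hexp : ∀ᶠ b in atTop, exp (-(c * b)) ≤ η :=
    (tendsto_exp_atBot.comp (tendsto_neg_atTop_atBot.comp
      (tendsto_id.const_mul_atTop hc))).eventually (ge_mem_nhds hη0)
  have hdiv : Tendsto (fun b : ℝ => b / m) atTop atTop := tendsto_id.atTop_div_const hm
  filter_upwards [hdiv.eventually hF, hexp] with b hFb hb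
  set n := ⌈k * (b / m)⌉₊
  have hSn : 1 - η ≤ μ.real {ω | b < ∑ i ∈ range n, X i ω} := by
    have hdev_n := hdev n b (by
      calc b = k * (b / m) * (m / k) := by field_simp
        _ ≤ n * (m / k) := by gcongr; exact Nat.le_ceil _)
    have hcover : μ.real Set.univ ≤ μ.real {ω | ∑ i ∈ range n, X i ω ≤ b}
        + μ.real {ω | b < ∑ i ∈ range n, X i ω} :=
      (measureReal_mono (fun ω _ => le_or_gt _ b) (measure_ne_top _ _)).trans
        (measureReal_union_le _ _)
    rw [probReal_univ] at hcover
    linarith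
  rw [le_div_iff₀ (hpos _)]
  calc (1 - η) ^ 2 * μ.real {ω | b / m < N ω}
      = (1 - η) * μ.real {ω | b / m < N ω} * (1 - η) := by ring
    _ ≤ μ.real {ω | k * (b / m) < N ω} * μ.real {ω | b < ∑ i ∈ range n, X i ω} := by
      gcongr
    _ ≤ μ.real {ω | b < ∑ i ∈ range (N ω), X i ω} :=
      measureReal_mul_le_measureReal_lt_sum_random hindepN hnn _ _

lemma eventually_measureReal_lt_sum_random_div_le (hm : 0 < m)
    (hmeasX : ∀ i, Measurable (X i)) (hnn : ∀ i ω, 0 ≤ X i ω) (hiid : iIndepFun X μ)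
    (hident : ∀ i, IdentDistrib (X i) (X 0) μ μ)
    (hmean : μ[X 0] = m) (h0 : 0 ∈ interior (integrableExpSet (X 0) μ))
    (hpos : ∀ x : ℝ, 0 < μ.real {ω | x < N ω}) (hk : 1 < k) (hη0 : 0 < η) (hη1 : η < 1)
    (hF : ∀ᶠ x : ℝ in atTop, (1 - η) * μ.real {ω | x < N ω} ≤ μ.real {ω | k * x < N ω}) :
    ∀ᶠ b in atTop,
      μ.real {ω | b < ∑ i ∈ range (N ω), X i ω} / μ.real {ω | b / m < N ω} ≤ (1 - η)⁻¹ + η := by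
  have hk0 : 0 < k := zero_lt_one.trans hk
  obtain ⟨c, hc, hdev⟩ := exists_measureReal_sum_range_gt_le_exp hmeasX hiid hident h0
    (mul_pos hm hk0) (by rw [hmean]; exact lt_mul_of_one_lt_right hm hk)
  have hanti : Antitone fun x : ℝ => μ.real {ω | x < N ω} :=
    fun x y hxy => measureReal_mono fun ω (h : y < _) => hxy.trans_lt h
  have hdiv : Tendsto (fun b : ℝ => b / m) atTop atTop := tendsto_id.atTop_div_const hm
  have hdiv' : Tendsto (fun b : ℝ => b / (m * k)) atTop atTop :=
    tendsto_id.atTop_div_const (mul_pos hm hk0)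
  have hdecay := (tendsto_exp_neg_mul_div_of_mul_le hanti hpos hk (sub_pos.2 hη1) (by linarith)
    hF (mul_pos hc hm)).comp hdiv
  filter_upwards [hdiv'.eventually hF,
    hdecay.eventually (ge_mem_nhds hη0), eventually_ge_atTop 0] with b hFb hdec hb
  have hkb : k * (b / (m * k)) = b / m := by field_simp
  have hcb : c * m * (b / m) = c * b := by field_simp
  rw [hkb] at hFb
  simp only [Function.comp_apply, hcb, div_le_iff₀ (hpos _)] at hdec
  rw [div_le_iff₀ (hpos _)]
  calc μ.real {ω | b < ∑ i ∈ range (N ω), X i ω}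
      ≤ μ.real {ω | b / (m * k) < N ω}
        + μ.real {ω | b < ∑ i ∈ range ⌊b / (m * k)⌋₊, X i ω} :=
      measureReal_lt_sum_random_le hnn _ _
    _ ≤ (1 - η)⁻¹ * μ.real {ω | b / m < N ω} + exp (-(c * b)) := by
      gcongr
      · exact (le_inv_mul_iff₀ (sub_pos.2 hη1)).2 hFb
      · refine hdev _ b ?_
        calc ⌊b / (m * k)⌋₊ * (m * k) ≤ b / (m * k) * (m * k) := by
              gcongr; exact Nat.floor_le (by positivity)
          _ = b := by field_simp
    _ ≤ ((1 - η)⁻¹ + η) * μ.real {ω | b / m < N ω} := by linarith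

end Asymptotics

theorem random_sum_tail_equivalence_general
    {Ω : Type*} [MeasurableSpace Ω] (μ : Measure Ω) [IsProbabilityMeasure μ]
    (N : Ω → ℕ) (X : ℕ → Ω → ℝ) (m : ℝ) (hm : 0 < m)
    (hmeasX : ∀ i, Measurable (X i))
    (hnn : ∀ i ω, 0 ≤ X i ω)
    (hiid : iIndepFun X μ)
    (hident : ∀ i, IdentDistrib (X i) (X 0) μ μ)
    (hindepN : IndepFun N (fun ω i => X i ω) μ)
    (hmean : ∫ ω, X 0 ω ∂μ = m)
    (hlight : ∃ θ : ℝ, 0 < θ ∧ ∫⁻ ω, ENNReal.ofReal (Real.exp (θ * X 0 ω)) ∂μ < ⊤)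
    (hpos : ∀ x : ℝ, 0 < (μ {ω | x < (N ω : ℝ)}).toReal)
    (hIRinf : Tendsto (fun k : ℝ => liminf (fun x : ℝ =>
          (μ {ω | k * x < (N ω : ℝ)}).toReal / (μ {ω | x < (N ω : ℝ)}).toReal) atTop)
        (nhdsWithin 1 (Set.Ioi 1)) (nhds 1)) :
    Tendsto (fun b : ℝ =>
        (μ {ω | b < ∑ i ∈ Finset.range (N ω), X i ω}).toReal /
          (μ {ω | b / m < (N ω : ℝ)}).toReal) atTop (nhds 1) := by
  obtain ⟨θ, hθ, hexp⟩ := hlight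
  have h0 : 0 ∈ interior (integrableExpSet (X 0) μ) :=
    zero_mem_interior_integrableExpSet_of_nonneg (hmeasX 0) (hnn 0) hθ
      ((lintegral_ofReal_ne_top_iff_integrable ((hmeasX 0).const_mul θ).exp.aestronglyMeasurable
        (ae_of_all _ fun _ => (exp_pos _).le)).1 hexp.ne)
  have hφ : Tendsto (fun η : ℝ => (1 - η) ^ 2) (𝓝[>] 0) (𝓝 1) := by
    have : Continuous fun η : ℝ => (1 - η) ^ 2 := by fun_prop
    exact (this.tendsto' 0 1 (by norm_num)).mono_left nhdsWithin_le_nhds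
  have hψ : Tendsto (fun η : ℝ => (1 - η)⁻¹ + η) (𝓝[>] 0) (𝓝 1) := by
    have : ContinuousAt (fun η : ℝ => (1 - η)⁻¹ + η) 0 := by fun_prop (disch := norm_num)
    convert this.tendsto.mono_left nhdsWithin_le_nhds using 2
    norm_num
  refine tendsto_of_eventually_le_le hφ hψ ?_
  filter_upwards [Ioo_mem_nhdsGT one_pos] with η ⟨hη0, hη1⟩
  obtain ⟨k, hk, hF⟩ :=
    exists_eventually_mul_le_of_tendsto_liminf hpos hIRinf (sub_lt_self 1 hη0)
  exact (eventually_sq_le_measureReal_lt_sum_random_div hm hmeasX hnn hiid hident hindepN hmean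
    h0 hpos hk hη0 hη1.le hF).and
    (eventually_measureReal_lt_sum_random_div_le hm hmeasX hnn hiid hident hmean h0 hpos hk hη0
      hη1 hF)

/-- If `N` is a nonnegative integer-valued random variable whose tail is intermediate-regularly
varying, and `X₁, X₂, ...` are i.i.d. nonnegative light-tailed random variables with mean
`m > 0`, independent of `N`, then `P(∑_{i=1}^N X_i > b) ~ P(N > b/m)` as `b → ∞`. -/
theorem random_sum_tail_equivalence
    {Ω : Type*} [MeasurableSpace Ω] (μ : Measure Ω) [IsProbabilityMeasure μ]
    (N : Ω → ℕ) (X : ℕ → Ω → ℝ) (m : ℝ) (hm : 0 < m)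
    (hmeasN : Measurable N) (hmeasX : ∀ i, Measurable (X i))
    (hnn : ∀ i ω, 0 ≤ X i ω)
    (hiid : iIndepFun X μ)
    (hident : ∀ i, IdentDistrib (X i) (X 0) μ μ)
    (hindepN : IndepFun N (fun ω i => X i ω) μ)
    (hmean : ∫ ω, X 0 ω ∂μ = m)
    (hlight : ∃ θ : ℝ, 0 < θ ∧ ∫⁻ ω, ENNReal.ofReal (Real.exp (θ * X 0 ω)) ∂μ < ⊤)
    (hpos : ∀ x : ℝ, 0 < (μ {ω | x < (N ω : ℝ)}).toReal)
    (hIRinf : Tendsto (fun k : ℝ => liminf (fun x : ℝ =>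
          (μ {ω | k * x < (N ω : ℝ)}).toReal / (μ {ω | x < (N ω : ℝ)}).toReal) atTop)
        (nhdsWithin 1 (Set.Ioi 1)) (nhds 1))
    (hIRsup : Tendsto (fun k : ℝ => limsup (fun x : ℝ =>
          (μ {ω | k * x < (N ω : ℝ)}).toReal / (μ {ω | x < (N ω : ℝ)}).toReal) atTop)
        (nhdsWithin 1 (Set.Ioi 1)) (nhds 1)) :
    Tendsto (fun b : ℝ =>
        (μ {ω | b < ∑ i ∈ Finset.range (N ω), X i ω}).toReal /
          (μ {ω | b / m < (N ω : ℝ)}).toReal) atTop (nhds 1) :=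
  random_sum_tail_equivalence_general μ N X m hm hmeasX hnn hiid hident hindepN hmean hlight hpos
    hIRinf
end

section
/- In the coupled two-queue system, the light queue in the fictitious system is never longer than in the original max-weight-α system: if both systems start with equal light queue lengths and receive the same arrival sample path, then q̃_L(t) ≤ q_L(t) for all t; consequently P(q_L > b) ≥ P(q̃_L > b) for all b. -/
open MeasureTheory

/-- Coupling of the max-weight-α system with the fictitious system: if both systems start with
equal queue lengths and receive the same arrival sample paths, then the light queue of the
fictitious system is never longer than that of the original system; consequently
`P(q_L > b) ≥ P(q̃_L > b)` for every `b`. -/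
theorem fictitious_light_queue_dominated
    {Ω : Type*} [MeasurableSpace Ω] (μ : Measure Ω)
    (αH αL : ℝ) (hαH : 0 < αH) (hαL : 0 < αL)
    (aH aL : ℕ → Ω → ℕ) (qH qL tH tL : ℕ → Ω → ℕ)
    (h0L : ∀ ω, tL 0 ω = qL 0 ω) (h0H : ∀ ω, tH 0 ω = qH 0 ω)
    (hqL : ∀ t ω, qL (t + 1) ω =
      (qL t ω - (if (qH t ω : ℝ) ^ αH ≤ (qL t ω : ℝ) ^ αL then 1 else 0)) + aL t ω)
    (hqH : ∀ t ω, qH (t + 1) ω =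
      (qH t ω - (if (qH t ω : ℝ) ^ αH ≤ (qL t ω : ℝ) ^ αL then 0 else 1)) + aH t ω)
    (htH : ∀ t ω, tH (t + 1) ω = (tH t ω - 1) + aH t ω)
    (htL : ∀ t ω, tL (t + 1) ω =
      (tL t ω - (if (tH t ω : ℝ) ^ αH ≤ (tL t ω : ℝ) ^ αL then 1 else 0)) + aL t ω) :
    (∀ t ω, tL t ω ≤ qL t ω) ∧
    (∀ (t b : ℕ), μ {ω | b < tL t ω} ≤ μ {ω | b < qL t ω}) := by
  have key : ∀ t ω, tL t ω ≤ qL t ω ∧ tH t ω ≤ qH t ω := by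
    intro t
    induction t with
    | zero => intro ω; exact ⟨(h0L ω).le, (h0H ω).le⟩
    | succ t ih =>
      intro ω
      obtain ⟨hL, hH⟩ := ih ω
      constructor
      · rw [htL, hqL]
        apply Nat.add_le_add_right
        by_cases hq : (qH t ω : ℝ) ^ αH ≤ (qL t ω : ℝ) ^ αL
        · rw [if_pos hq]
          by_cases ht : (tH t ω : ℝ) ^ αH ≤ (tL t ω : ℝ) ^ αL
          · rw [if_pos ht]; exact Nat.sub_le_sub_right hL 1
          · rw [if_neg ht]
            simp only [Nat.sub_zero]
            push_neg at ht
            have hcast : (tH t ω : ℝ) ^ αH ≤ (qH t ω : ℝ) ^ αH :=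
              Real.rpow_le_rpow (Nat.cast_nonneg _) (Nat.cast_le.mpr hH) hαH.le
            have hlt : (tL t ω : ℝ) ^ αL < (qL t ω : ℝ) ^ αL :=
              lt_of_lt_of_le (lt_of_lt_of_le ht hcast) hq
            have : tL t ω < qL t ω := by
              by_contra hcon
              push_neg at hcon
              exact absurd (Real.rpow_le_rpow (Nat.cast_nonneg _)
                (Nat.cast_le.mpr hcon) hαL.le) (not_le.mpr hlt)
            omega
        · rw [if_neg hq]
          have : tL t ω - (if (tH t ω : ℝ) ^ αH ≤ (tL t ω : ℝ) ^ αL then 1 else 0)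
              ≤ tL t ω := Nat.sub_le _ _
          simpa using this.trans hL
      · rw [htH, hqH]
        apply Nat.add_le_add_right
        have : qH t ω - 1 ≤ qH t ω - (if (qH t ω : ℝ) ^ αH ≤ (qL t ω : ℝ) ^ αL
            then 0 else 1) := by
          split <;> omega
        exact (Nat.sub_le_sub_right hH 1).trans this
  refine ⟨fun t ω => (key t ω).1, fun t b => ?_⟩
  apply measure_mono
  intro ω hω
  exact lt_of_lt_of_le hω ((key t ω).1)
end
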